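/- The function h(x) = exp(−(√(1+x²)+x)/4) belongs to the Gevrey class 𝒢¹_{1,7/2}(ℝ), i.e., |h^{(k)}(x)| ≤ (7/2)^k k! for all x ∈ ℝ and k ≥ 0, and its first derivative is integrable on ℝ. -/

import Mathlib

/-!
`h` is the restriction of `exp (-(√(1 + z²) + z) / 4)`, holomorphic on the strip `|Im z| < 1`
(the branch points of the principal root are `±i`). This extension has modulus at most `1`
everywhere: the principal root `w` has `Re w ≥ 0`, and since `(w + z)(w - z) = 1` the factors
`w ± z` are inverse to each other, so their real parts have the same sign, forcing `Re (w + z) ≥ 0`.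
Cauchy's estimate on discs of radius `2/7` centred on `ℝ` then gives the Gevrey bound.
Integrability of `h'`: it is nonpositive, so `∫_{-r}^{r} |h'| = h(-r) - h(r) ≤ 2`.
-/

open Complex Metric MeasureTheory Set Filter

theorem DifferentiableOn.iteratedDeriv_ofReal {U : Set ℂ} {F : ℂ → ℂ}
    (hF : DifferentiableOn ℂ F U) (hU : IsOpen U) {f : ℝ → ℝ} (hmem : ∀ x : ℝ, (x : ℂ) ∈ U)
    (hFf : ∀ x : ℝ, F x = f x) (n : ℕ) (x : ℝ) :
    iteratedDeriv n F x = iteratedDeriv n f x := by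
  induction n generalizing x with
  | zero => simpa using hFf x
  | succ n ih =>
    have hG : HasDerivAt (iteratedDeriv n F) (iteratedDeriv (n + 1) F x) x := by
      rw [iteratedDeriv_succ, iteratedDeriv_eq_iterate]
      exact ((hF.analyticOnNhd hU).iterated_deriv n _ (hmem x)).differentiableAt.hasDerivAt
    have hre : HasDerivAt (iteratedDeriv n f) (iteratedDeriv (n + 1) F x).re x := by
      simpa [ih] using hG.real_of_complex
    have hofReal : HasDerivAt (fun y : ℝ => ((iteratedDeriv n f y : ℝ) : ℂ))
        (iteratedDeriv (n + 1) F x) x := by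
      simpa [ih] using hG.comp_ofReal
    rw [iteratedDeriv_succ (f := f), hre.deriv]
    exact hofReal.unique hre.ofReal_comp

theorem Complex.re_nonneg_of_mul_eq_one {a b : ℂ} (hab : a * b = 1) (hre : 0 ≤ (a + b).re) :
    0 ≤ a.re := by
  have hb : b = a⁻¹ := eq_inv_of_mul_eq_one_right hab
  by_contra! ha
  have : b.re ≤ 0 := by
    rw [hb, inv_re]
    exact div_nonpos_of_nonpos_of_nonneg ha.le (normSq_nonneg a)
  rw [add_re] at hre
  linarith

theorem Complex.one_add_sq_mem_slitPlane {z : ℂ} (hz : z.im ∈ Ioo (-1) 1) :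
    1 + z ^ 2 ∈ slitPlane := by
  rw [mem_slitPlane_iff]
  have hre : (1 + z ^ 2).re = 1 + z.re ^ 2 - z.im ^ 2 := by simp [sq]; ring
  have him : (1 + z ^ 2).im = 2 * z.re * z.im := by simp [sq]; ring
  rw [hre, him]
  by_contra! h
  obtain ⟨hre0, him0⟩ := h
  have hy : z.im ^ 2 < 1 := by nlinarith [hz.1, hz.2]
  rcases mul_eq_zero.1 him0 with h | h
  · have : z.re = 0 := by linarith
    nlinarith
  · nlinarith [sq_nonneg z.re]

theorem MeasureTheory.integrable_deriv_of_nonpos_of_abs_le {g : ℝ → ℝ} (hd : Differentiable ℝ g)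
    (hg' : ∀ x, deriv g x ≤ 0) {C : ℝ} (hC : ∀ x, |g x| ≤ C) : Integrable (deriv g) := by
  have hloc : ∀ a b, IntegrableOn (deriv g) (Ioc a b) := fun a b => by
    simpa using (intervalIntegral.integrableOn_deriv_of_nonneg (g := -g) (g' := -deriv g)
      (hd.neg.continuous.continuousOn) (fun x _ => (hd x).hasDerivAt.neg)
      (fun x _ => neg_nonneg.2 (hg' x))).neg
  refine integrable_of_intervalIntegral_norm_bounded (2 * C) (fun r => hloc (-r) r)
    tendsto_neg_atTop_atBot tendsto_id (Eventually.of_forall fun r => ?_)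
  have hint : IntervalIntegrable (deriv g) volume (-r) r := by
    rcases le_total (-r) r with h | h
    · exact (intervalIntegrable_iff_integrableOn_Ioc_of_le h).2 (hloc _ _)
    · exact ((intervalIntegrable_iff_integrableOn_Ioc_of_le h).2 (hloc _ _)).symm
  simp only [Real.norm_of_nonpos (hg' _), intervalIntegral.integral_neg,
    intervalIntegral.integral_deriv_eq_sub (fun x _ => hd x) hint]
  linarith [abs_le.1 (hC r), abs_le.1 (hC (-r))]

namespace GevreyExample

noncomputable def h (x : ℝ) : ℝ := Real.exp (-(Real.sqrt (1 + x ^ 2) + x) / 4)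

noncomputable def hExt (z : ℂ) : ℂ := Complex.exp (-((1 + z ^ 2) ^ (2⁻¹ : ℂ) + z) / 4)

theorem hExt_ofReal (x : ℝ) : hExt x = h x := by
  have hsqrt : ((Real.sqrt (1 + x ^ 2) : ℝ) : ℂ) = (1 + (x : ℂ) ^ 2) ^ (2⁻¹ : ℂ) := by
    rw [Real.sqrt_eq_rpow, Complex.ofReal_cpow (by positivity)]
    push_cast
    ring_nf
  rw [h, hExt, Complex.ofReal_exp]
  push_cast [hsqrt]
  rfl

theorem norm_hExt_le_one (z : ℂ) : ‖hExt z‖ ≤ 1 := by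
  rw [hExt, norm_exp, Real.exp_le_one_iff]
  set w := (1 + z ^ 2) ^ (2⁻¹ : ℂ)
  have hprod : (w + z) * (w - z) = 1 := by
    linear_combination Complex.cpow_ofNat_inv_pow (1 + z ^ 2) 2
  have hw : 0 ≤ w.re := by
    rw [cpow_inv_two_re]
    positivity
  have hwz := re_nonneg_of_mul_eq_one hprod (by simp only [add_re, sub_re]; linarith)
  simp only [div_ofNat_re, neg_re, add_re] at hwz ⊢
  linarith

theorem differentiableOn_hExt : DifferentiableOn ℂ hExt (im ⁻¹' Ioo (-1) 1) := fun z hz => by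
  have hsq : DifferentiableAt ℂ (fun z : ℂ => 1 + z ^ 2) z := by fun_prop
  exact (((hsq.cpow_const (one_add_sq_mem_slitPlane hz)).add differentiableAt_id).neg.div_const
    4).cexp.differentiableWithinAt

theorem abs_iteratedDeriv_h_le (k : ℕ) (x : ℝ) :
    |iteratedDeriv k h x| ≤ (7 / 2 : ℝ) ^ k * k.factorial := by
  have hball : closedBall (x : ℂ) (2 / 7) ⊆ im ⁻¹' Ioo (-1) 1 := fun z hz => by
    have := (abs_im_le_norm (z - x)).trans (mem_closedBall_iff_norm.1 hz)
    simp only [sub_im, ofReal_im, sub_zero] at this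
    exact abs_lt.1 (this.trans_lt (by norm_num))
  -- Any radius below 1, the distance from `ℝ` to the branch points `±i`, works; `2/7` gives `7/2`.
  have hcauchy := norm_iteratedDeriv_le_of_forall_mem_sphere_norm_le k (by norm_num)
    (differentiableOn_hExt.diffContOnCl_ball hball) (fun z _ => norm_hExt_le_one z)
  rw [differentiableOn_hExt.iteratedDeriv_ofReal (isOpen_Ioo.preimage continuous_im)
    (fun x => by simp) hExt_ofReal, norm_real, Real.norm_eq_abs] at hcauchy
  calc |iteratedDeriv k h x| ≤ k.factorial * 1 / (2 / 7) ^ k := hcauchy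
    _ = (7 / 2 : ℝ) ^ k * k.factorial := by
      field_simp
      rw [← mul_pow]
      norm_num

theorem abs_h_le_one (x : ℝ) : |h x| ≤ 1 := by
  simpa [hExt_ofReal] using norm_hExt_le_one x

theorem hasDerivAt_h (x : ℝ) :
    HasDerivAt h (h x * (-(x / Real.sqrt (1 + x ^ 2) + 1) / 4)) x := by
  have hsqrt : HasDerivAt (fun x : ℝ => Real.sqrt (1 + x ^ 2)) (x / Real.sqrt (1 + x ^ 2)) x := by
    convert ((hasDerivAt_pow 2 x).const_add 1).sqrt (by positivity) using 1
    field_simp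
    ring
  exact ((hsqrt.add (hasDerivAt_id x)).neg.div_const 4).exp

theorem deriv_h_nonpos (x : ℝ) : deriv h x ≤ 0 := by
  rw [(hasDerivAt_h x).deriv]
  have hs : |x| ≤ Real.sqrt (1 + x ^ 2) := Real.abs_le_sqrt (by linarith)
  have : -1 ≤ x / Real.sqrt (1 + x ^ 2) := by
    rw [le_div_iff₀ (Real.sqrt_pos.2 (by positivity))]
    linarith [neg_abs_le x]
  exact mul_nonpos_of_nonneg_of_nonpos (Real.exp_pos _).le (by linarith)

end GevreyExample

/-- The function `h(x) = exp(−(√(1+x²)+x)/4)` belongs to the Gevrey class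
`𝒢¹_{1,7/2}(ℝ)`: `|h^{(k)}(x)| ≤ (7/2)^k k!` for all `k`, `x`; moreover `h'`
is integrable on `ℝ`. -/
theorem stmt_12 :
    (∀ (k : ℕ) (x : ℝ),
      |iteratedDeriv k
          (fun x : ℝ => Real.exp (-(Real.sqrt (1 + x ^ 2) + x) / 4)) x| ≤
        (7 / 2 : ℝ) ^ k * Nat.factorial k) ∧
    MeasureTheory.Integrable
      (deriv fun x : ℝ => Real.exp (-(Real.sqrt (1 + x ^ 2) + x) / 4)) :=
  ⟨GevreyExample.abs_iteratedDeriv_h_le, integrable_deriv_of_nonpos_of_abs_le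
    (fun x => (GevreyExample.hasDerivAt_h x).differentiableAt) GevreyExample.deriv_h_nonpos
    GevreyExample.abs_h_le_one⟩
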